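/- Let (𝒳, Σ) be a measurable space, μ a probability measure on 𝒳, and β₁, β₋₁ : 𝒳 → ℝ integrable functions. Let δ > 0 and let L : ℝ → ℝ be the doubled smoothed ramp loss: L(u) = 0 for u ≤ −δ, L(u) = (1 + u/δ)² for −δ < u ≤ 0, L(u) = 2 − (1 − u/δ)² for 0 < u < δ, and L(u) = 2 for u ≥ δ. Then the supremum over measurable f : 𝒳 → ℝ of ∫ (L(f(x))·β₁(x) + L(−f(x))·β₋₁(x)) dμ(x) equals 2·∫ max(β₁(x), β₋₁(x)) dμ(x), and this supremum is attained by the function f*(x) = δ if β₁(x) ≥ β₋₁(x) and f*(x) = −δ otherwise. Moreover, the supremum over measurable d : 𝒳 → {−1, 1} of ∫ (1{d(x) = 1}·β₁(x) + 1{d(x) = −1}·β₋₁(x)) dμ(x) equals ∫ max(β₁(x), β₋₁(x)) dμ(x). -/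

import Mathlib

open MeasureTheory

/-!
Since `L(u) + L(-u) = 2` with both terms nonnegative, the integrand `L(f)β₁ + L(-f)β₋₁`
is a nonnegative combination of `β₁` and `β₋₁` with total weight `2`, hence at most
`2 max(β₁, β₋₁)` pointwise; `f*` puts the whole weight on the larger payload, so the bound
is attained. The indicators `1{d = 1}` and `1{d = -1}` likewise have total weight `1`.
-/

noncomputable def rampL (δ u : ℝ) : ℝ :=
  if u ≤ -δ then 0
  else if u ≤ 0 then (1 + u / δ) ^ 2
  else if u < δ then 2 - (1 - u / δ) ^ 2
  else 2

lemma mul_add_mul_le_add_mul_max {a b x y : ℝ} (ha : 0 ≤ a) (hb : 0 ≤ b) :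
    a * x + b * y ≤ (a + b) * max x y := by
  rw [add_mul]
  exact add_le_add (mul_le_mul_of_nonneg_left (le_max_left x y) ha)
    (mul_le_mul_of_nonneg_left (le_max_right x y) hb)

section Ramp

variable {δ : ℝ}

lemma measurable_rampL (δ : ℝ) : Measurable (rampL δ) := by
  unfold rampL
  refine Measurable.ite measurableSet_Iic measurable_const ?_
  refine Measurable.ite measurableSet_Iic (by fun_prop) ?_
  exact Measurable.ite measurableSet_Iio (by fun_prop) measurable_const

lemma rampL_nonneg (hδ : 0 < δ) (u : ℝ) : 0 ≤ rampL δ u := by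
  unfold rampL
  split_ifs with h₁ h₂ h₃
  · rfl
  · positivity
  · have : u / δ < 1 := (div_lt_one hδ).2 h₃
    have : 0 < u / δ := div_pos (not_le.1 h₂) hδ
    nlinarith
  · exact zero_le_two

lemma rampL_add_rampL_neg (hδ : 0 < δ) (u : ℝ) : rampL δ u + rampL δ (-u) = 2 := by
  unfold rampL
  split_ifs <;> first
    | ring1
    | linarith
    | (obtain rfl : u = 0 := by linarith
       norm_num)

lemma rampL_le_two (hδ : 0 < δ) (u : ℝ) : rampL δ u ≤ 2 := by
  linarith [rampL_add_rampL_neg hδ u, rampL_nonneg hδ (-u)]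

lemma abs_rampL_le_two (hδ : 0 < δ) (u : ℝ) : |rampL δ u| ≤ 2 :=
  abs_le.2 ⟨by linarith [rampL_nonneg hδ u], rampL_le_two hδ u⟩

lemma rampL_self (hδ : 0 < δ) : rampL δ δ = 2 := by
  unfold rampL; split_ifs <;> first | rfl | linarith

lemma rampL_neg_self : rampL δ (-δ) = 0 := by
  simp [rampL]

lemma rampL_mul_add_rampL_neg_mul_le (hδ : 0 < δ) (u x y : ℝ) :
    rampL δ u * x + rampL δ (-u) * y ≤ 2 * max x y :=
  rampL_add_rampL_neg hδ u ▸
    mul_add_mul_le_add_mul_max (rampL_nonneg hδ u) (rampL_nonneg hδ (-u))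

lemma rampL_ite_mul_add (hδ : 0 < δ) (x y : ℝ) :
    rampL δ (if y ≤ x then δ else -δ) * x + rampL δ (-(if y ≤ x then δ else -δ)) * y
      = 2 * max x y := by
  split_ifs with h
  · simp [rampL_self hδ, rampL_neg_self, max_eq_left h]
  · simp [rampL_self hδ, rampL_neg_self, max_eq_right (le_of_not_ge h)]

end Ramp

lemma ite_eq_one_mul_add_le_max {t : ℝ} (ht : t = 1 ∨ t = -1) (x y : ℝ) :
    (if t = 1 then (1 : ℝ) else 0) * x + (if t = -1 then (1 : ℝ) else 0) * y ≤ max x y := by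
  rcases ht with rfl | rfl <;> norm_num

lemma ite_sign_mul_add (x y : ℝ) :
    (if (if y ≤ x then (1 : ℝ) else -1) = 1 then (1 : ℝ) else 0) * x
      + (if (if y ≤ x then (1 : ℝ) else -1) = -1 then (1 : ℝ) else 0) * y = max x y := by
  by_cases h : y ≤ x
  · norm_num [h]
  · norm_num [h, (not_le.1 h).le]

section Integral

variable {𝒳 : Type*} [MeasurableSpace 𝒳] {μ : Measure 𝒳} {δ : ℝ}

lemma integrable_mul_add_mul_of_abs_le {w₁ w₂ β₁ β₂ : 𝒳 → ℝ} {C : ℝ}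
    (hw₁ : Measurable w₁) (hw₂ : Measurable w₂)
    (hC₁ : ∀ x, |w₁ x| ≤ C) (hC₂ : ∀ x, |w₂ x| ≤ C)
    (hβ₁ : Integrable β₁ μ) (hβ₂ : Integrable β₂ μ) :
    Integrable (fun x => w₁ x * β₁ x + w₂ x * β₂ x) μ :=
  (hβ₁.bdd_mul hw₁.aestronglyMeasurable (.of_forall hC₁)).add
    (hβ₂.bdd_mul hw₂.aestronglyMeasurable (.of_forall hC₂))

lemma isGreatest_integral_of_le_of_eq {ι : Type*} {P : ι → Prop} (F : ι → 𝒳 → ℝ)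
    {g : 𝒳 → ℝ} (hF : ∀ i, P i → Integrable (F i) μ) (hg : Integrable g μ)
    (hle : ∀ i, P i → ∀ x, F i x ≤ g x) {i₀ : ι} (hi₀ : P i₀)
    (heq : ∀ x, F i₀ x = g x) :
    IsGreatest {v | ∃ i, P i ∧ v = ∫ x, F i x ∂μ} (∫ x, g x ∂μ) :=
  ⟨⟨i₀, hi₀, integral_congr_ae (.of_forall heq) |>.symm⟩, by
    rintro _ ⟨i, hi, rfl⟩
    exact integral_mono (hF i hi) hg (hle i hi)⟩

variable {β₁ β₂ : 𝒳 → ℝ}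

lemma measurable_ite_le (hβ₁m : Measurable β₁) (hβ₂m : Measurable β₂) (a b : ℝ) :
    Measurable fun x => if β₂ x ≤ β₁ x then a else b :=
  Measurable.ite (measurableSet_le hβ₂m hβ₁m) measurable_const measurable_const

lemma integral_rampL_ite (hδ : 0 < δ) :
    ∫ x, (rampL δ (if β₂ x ≤ β₁ x then δ else -δ) * β₁ x
      + rampL δ (-if β₂ x ≤ β₁ x then δ else -δ) * β₂ x) ∂μ
        = 2 * ∫ x, max (β₁ x) (β₂ x) ∂μ := by
  rw [← integral_const_mul]
  exact integral_congr_ae (.of_forall fun x => rampL_ite_mul_add hδ _ _)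

lemma isGreatest_integral_rampL (hβ₁m : Measurable β₁) (hβ₂m : Measurable β₂)
    (hβ₁ : Integrable β₁ μ) (hβ₂ : Integrable β₂ μ) (hδ : 0 < δ) :
    IsGreatest {v | ∃ f : 𝒳 → ℝ, Measurable f ∧
        v = ∫ x, (rampL δ (f x) * β₁ x + rampL δ (-f x) * β₂ x) ∂μ}
      (2 * ∫ x, max (β₁ x) (β₂ x) ∂μ) := by
  rw [← integral_const_mul]
  exact isGreatest_integral_of_le_of_eq (P := Measurable)
    (fun f x => rampL δ (f x) * β₁ x + rampL δ (-f x) * β₂ x)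
    (fun f hf => integrable_mul_add_mul_of_abs_le ((measurable_rampL δ).comp hf)
      ((measurable_rampL δ).comp hf.neg) (fun _ => abs_rampL_le_two hδ _)
      (fun _ => abs_rampL_le_two hδ _) hβ₁ hβ₂)
    ((hβ₁.sup hβ₂).const_mul 2) (fun f _ x => rampL_mul_add_rampL_neg_mul_le hδ _ _ _)
    (measurable_ite_le hβ₁m hβ₂m δ (-δ)) (fun x => rampL_ite_mul_add hδ _ _)

lemma measurable_ite_eq_one_zero {d : 𝒳 → ℝ} (hd : Measurable d) (t : ℝ) :
    Measurable fun x => if d x = t then (1 : ℝ) else 0 :=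
  Measurable.ite (hd (measurableSet_singleton t)) measurable_const measurable_const

lemma isGreatest_integral_decision (hβ₁m : Measurable β₁) (hβ₂m : Measurable β₂)
    (hβ₁ : Integrable β₁ μ) (hβ₂ : Integrable β₂ μ) :
    IsGreatest {v | ∃ d : 𝒳 → ℝ, Measurable d ∧ (∀ x, d x = 1 ∨ d x = -1) ∧
        v = ∫ x, ((if d x = 1 then (1 : ℝ) else 0) * β₁ x
          + (if d x = -1 then (1 : ℝ) else 0) * β₂ x) ∂μ}
      (∫ x, max (β₁ x) (β₂ x) ∂μ) := by
  simp only [← and_assoc]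
  exact isGreatest_integral_of_le_of_eq (P := fun d => Measurable d ∧ ∀ x, d x = 1 ∨ d x = -1)
    (fun d x => (if d x = 1 then (1 : ℝ) else 0) * β₁ x
      + (if d x = -1 then (1 : ℝ) else 0) * β₂ x)
    (fun d hd => integrable_mul_add_mul_of_abs_le (measurable_ite_eq_one_zero hd.1 1)
      (measurable_ite_eq_one_zero hd.1 (-1)) (C := 1) (fun _ => by split_ifs <;> norm_num)
      (fun _ => by split_ifs <;> norm_num) hβ₁ hβ₂)
    (hβ₁.sup hβ₂) (fun d hd x => ite_eq_one_mul_add_le_max (hd.2 x) _ _)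
    (i₀ := fun x => if β₂ x ≤ β₁ x then 1 else -1)
    ⟨measurable_ite_le hβ₁m hβ₂m 1 (-1), fun x => by split_ifs <;> simp⟩
    (fun x => ite_sign_mul_add _ _)

end Integral

theorem stmt_12_general {𝒳 : Type*} [MeasurableSpace 𝒳] (μ : Measure 𝒳)
    (β1 βm1 : 𝒳 → ℝ) (hβ1m : Measurable β1) (hβm1m : Measurable βm1)
    (hβ1 : Integrable β1 μ) (hβm1 : Integrable βm1 μ)
    (δ : ℝ) (hδ : 0 < δ) :
    sSup {v : ℝ | ∃ f : 𝒳 → ℝ, Measurable f ∧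
        v = ∫ x, (rampL δ (f x) * β1 x + rampL δ (-f x) * βm1 x) ∂μ}
      = 2 * ∫ x, max (β1 x) (βm1 x) ∂μ ∧
    (Measurable (fun x => if βm1 x ≤ β1 x then δ else -δ) ∧
      ∫ x, (rampL δ ((if βm1 x ≤ β1 x then δ else -δ) : ℝ) * β1 x
          + rampL δ (-((if βm1 x ≤ β1 x then δ else -δ) : ℝ)) * βm1 x) ∂μ
        = 2 * ∫ x, max (β1 x) (βm1 x) ∂μ) ∧
    sSup {v : ℝ | ∃ d : 𝒳 → ℝ, Measurable d ∧ (∀ x, d x = 1 ∨ d x = -1) ∧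
        v = ∫ x, ((if d x = 1 then (1 : ℝ) else 0) * β1 x
          + (if d x = -1 then (1 : ℝ) else 0) * βm1 x) ∂μ}
      = ∫ x, max (β1 x) (βm1 x) ∂μ := by
  exact ⟨(isGreatest_integral_rampL hβ1m hβm1m hβ1 hβm1 hδ).csSup_eq,
    ⟨measurable_ite_le hβ1m hβm1m δ (-δ), integral_rampL_ite hδ⟩,
    (isGreatest_integral_decision hβ1m hβm1m hβ1 hβm1).csSup_eq⟩

/-- the key identities (key0)-(key2) of the paper. For integrable payloads
`β₁, β₋₁`, the supremum over measurable `f` of `∫ (L(f)β₁ + L(-f)β₋₁) dμ` equals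
`2 ∫ max(β₁, β₋₁) dμ`, attained at `f* = δ·1{β₁ ≥ β₋₁} - δ·1{β₁ < β₋₁}`; and the supremum
over measurable rules `d : 𝒳 → {-1,1}` of `∫ (1{d=1}β₁ + 1{d=-1}β₋₁) dμ` equals
`∫ max(β₁, β₋₁) dμ`. -/
theorem stmt_12 {𝒳 : Type*} [MeasurableSpace 𝒳] (μ : Measure 𝒳) [IsProbabilityMeasure μ]
    (β1 βm1 : 𝒳 → ℝ) (hβ1m : Measurable β1) (hβm1m : Measurable βm1)
    (hβ1 : Integrable β1 μ) (hβm1 : Integrable βm1 μ)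
    (δ : ℝ) (hδ : 0 < δ) :
    sSup {v : ℝ | ∃ f : 𝒳 → ℝ, Measurable f ∧
        v = ∫ x, (rampL δ (f x) * β1 x + rampL δ (-f x) * βm1 x) ∂μ}
      = 2 * ∫ x, max (β1 x) (βm1 x) ∂μ ∧
    (Measurable (fun x => if βm1 x ≤ β1 x then δ else -δ) ∧
      ∫ x, (rampL δ ((if βm1 x ≤ β1 x then δ else -δ) : ℝ) * β1 x
          + rampL δ (-((if βm1 x ≤ β1 x then δ else -δ) : ℝ)) * βm1 x) ∂μ
        = 2 * ∫ x, max (β1 x) (βm1 x) ∂μ) ∧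
    sSup {v : ℝ | ∃ d : 𝒳 → ℝ, Measurable d ∧ (∀ x, d x = 1 ∨ d x = -1) ∧
        v = ∫ x, ((if d x = 1 then (1 : ℝ) else 0) * β1 x
          + (if d x = -1 then (1 : ℝ) else 0) * βm1 x) ∂μ}
      = ∫ x, max (β1 x) (βm1 x) ∂μ :=
  stmt_12_general μ β1 βm1 hβ1m hβm1m hβ1 hβm1 δ hδ
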